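/- If G is a cubic graph that is bipartite, then the 3-coalition number of G satisfies C_3(G) = 4. -/

import Mathlib

open SimpleGraph

/-- A set `S` is a `k`-dominating set of `G` if every vertex outside `S`
has at least `k` neighbors in `S`. -/
def KDominatingSet {V : Type*} (G : SimpleGraph V) (k : ℕ) (S : Set V) : Prop :=
  ∀ v ∉ S, k ≤ (S ∩ G.neighborSet v).ncard

/-- Two disjoint sets `A` and `B` form a `k`-coalition in `G` if neither is a
`k`-dominating set of `G` but their union is. -/
def KCoalition {V : Type*} (G : SimpleGraph V) (k : ℕ) (A B : Set V) : Prop :=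
  Disjoint A B ∧ ¬ KDominatingSet G k A ∧ ¬ KDominatingSet G k B ∧
    KDominatingSet G k (A ∪ B)

/-- A `k`-coalition partition of `G` is a partition of the vertex set in which every
part is either a `k`-dominating set of cardinality `k` or forms a `k`-coalition with
another part. -/
def KCoalitionPartition {V : Type*} (G : SimpleGraph V) (k : ℕ) (P : Finset (Set V)) : Prop :=
  (∀ A ∈ P, A.Nonempty) ∧
  (P : Set (Set V)).PairwiseDisjoint id ∧
  (⋃ A ∈ P, A) = (Set.univ : Set V) ∧
  ∀ A ∈ P, (KDominatingSet G k A ∧ A.ncard = k) ∨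
    ∃ B ∈ P, B ≠ A ∧ KCoalition G k A B

/-- The `k`-coalition number of `G`: the maximum cardinality of a
`k`-coalition partition of `G`. -/
noncomputable def kCoalitionNumber {V : Type*} (G : SimpleGraph V) (k : ℕ) : ℕ :=
  sSup {n | ∃ P : Finset (Set V), KCoalitionPartition G k P ∧ P.card = n}


/-!
In a `k`-regular graph a set is `k`-dominating exactly when it is a vertex cover, so a
`k`-coalition is a pair of disjoint non-covers whose union is a vertex cover.

Lower bound: the two colour classes `S`, `Sᶜ` of a bipartite graph are vertex covers; for an
edge `xy` with `x ∈ S`, the pairs `{x}, S \ {x}` and `{y}, Sᶜ \ {y}` are coalitions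
(degree `≥ 2` supplies an edge avoiding `x`, resp. `y`), giving a partition into four parts.

Upper bound: a `k`-dominating part `D` with `|D| = k` is the whole neighbourhood of every vertex
outside it, so `V \ D ⊆ N(d)` for `d ∈ D` and there are at most `k + 1` parts. Otherwise
every part has a covering partner. Two disjoint vertex covers of a graph without isolated
vertices cover `V`, so with five or more parts no two covering pairs are disjoint; hence all
pairs share one part `Z`, and since every edge misses some part `H ≠ Z`, `Z ∪ H` covering it
forces `Z` itself to be a vertex cover, a contradiction.
-/

section

variable {V : Type*} {G : SimpleGraph V} {k : ℕ}

theorem SimpleGraph.ncard_neighborSet_eq_degree [G.LocallyFinite] (v : V) :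
    (G.neighborSet v).ncard = G.degree v := by
  rw [← coe_neighborFinset, Set.ncard_coe_finset, card_neighborFinset_eq_degree]

theorem SimpleGraph.IsVertexCover.union_eq_univ_of_disjoint {S T : Set V}
    (hS : G.IsVertexCover S) (hT : G.IsVertexCover T) (hST : Disjoint S T)
    (hG : ∀ v, ∃ w, G.Adj v w) : S ∪ T = Set.univ := by
  refine Set.eq_univ_of_forall fun v => ?_
  obtain ⟨w, hvw⟩ := hG v
  rcases hS hvw with hv | hwS
  · exact .inl hv
  rcases hT hvw with hv | hwT
  · exact .inr hv
  · exact absurd hwT (Set.disjoint_left.mp hST hwS)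

theorem SimpleGraph.Colorable.exists_isVertexCover_and_compl (h : G.Colorable 2) :
    ∃ S, G.IsVertexCover S ∧ G.IsVertexCover Sᶜ := by
  obtain ⟨c⟩ := h
  refine ⟨{v | c v = 0}, fun u v huv => ?_, fun u v huv => ?_⟩ <;>
  · have := c.valid huv
    simp only [Set.mem_ofPred_eq, Set.mem_compl_iff]
    omega

theorem Finset.card_le_ncard_of_pairwiseDisjoint {Q : Finset (Set V)} {S : Set V}
    (hne : ∀ A ∈ Q, A.Nonempty) (hdisj : (Q : Set (Set V)).PairwiseDisjoint id)
    (hsub : ∀ A ∈ Q, A ⊆ S) (hS : S.Finite) : Q.card ≤ S.ncard := by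
  rcases Q.eq_empty_or_nonempty with rfl | ⟨A₀, hA₀⟩
  · simp
  obtain ⟨v₀, -⟩ := hne A₀ hA₀
  have : Nonempty V := ⟨v₀⟩
  have hpick : ∀ A ∈ Q, Classical.epsilon (· ∈ A) ∈ A := fun A hA =>
    Classical.epsilon_spec (hne A hA)
  rw [← Set.ncard_coe_finset]
  exact Set.ncard_le_ncard_of_injOn _ (fun A hA => hsub A hA (hpick A hA))
    (fun A hA B hB hAB => hdisj.elim_set hA hB _ (hpick A hA) (hAB ▸ hpick B hB)) hS

theorem Finset.exists_mem_ne_of_four_lt_card {α : Type*} {s : Finset α} (h : 4 < s.card)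
    (a b c d : α) : ∃ e ∈ s, e ≠ a ∧ e ≠ b ∧ e ≠ c ∧ e ≠ d := by
  classical
  obtain ⟨e, he, he'⟩ := exists_mem_notMem_of_card_lt_card (card_le_four.trans_lt h)
  simp only [mem_insert, mem_singleton, not_or] at he'
  exact ⟨e, he, he'⟩

/-- Read as a graph on `P`: without isolated vertices and with no two disjoint edges, `R` is a
star or a triangle. -/
theorem Finset.exists_forall_ne_rel_of_no_disjoint_pairs {α : Type*} {P : Finset α}
    {R : α → α → Prop} (hsymm : ∀ ⦃A B⦄, R A B → R B A) (hirr : ∀ A ∈ P, ¬ R A A)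
    (hP : P.Nonempty) (hex : ∀ A ∈ P, ∃ B ∈ P, R A B)
    (hdisj : ∀ A ∈ P, ∀ B ∈ P, ∀ C ∈ P, ∀ D ∈ P,
      A ≠ C → A ≠ D → B ≠ C → B ≠ D → R A B → ¬ R C D) :
    ∃ Z ∈ P, ∀ F ∈ P, F ≠ Z → R Z F := by
  obtain ⟨A, hA⟩ := hP
  obtain ⟨B, hB, hAB⟩ := hex A hA
  have hBA : B ≠ A := by
    rintro rfl
    exact hirr B hB hAB
  have partner_mem {F Y : α} (hF : F ∈ P) (hY : Y ∈ P) (hFA : F ≠ A) (hFB : F ≠ B)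
      (hFY : R F Y) : Y = A ∨ Y = B := by
    by_contra! hY'
    exact hdisj F hF Y hY A hA B hB hFA hFB hY'.1 hY'.2 hFY hAB
  by_contra! hno
  obtain ⟨F, hF, hFA, hAF⟩ := hno A hA
  obtain ⟨F', hF', hF'B, hBF'⟩ := hno B hB
  have hFB : F ≠ B := by
    rintro rfl
    exact hAF hAB
  have hF'A : F' ≠ A := by
    rintro rfl
    exact hBF' (hsymm hAB)
  obtain ⟨Y, hY, hFY⟩ := hex F hF
  obtain ⟨Y', hY', hF'Y'⟩ := hex F' hF'
  obtain rfl : Y = B := (partner_mem hF hY hFA hFB hFY).resolve_left <| by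
    rintro rfl
    exact hAF (hsymm hFY)
  obtain rfl : Y' = A := (partner_mem hF' hY' hF'A hF'B hF'Y').resolve_right <| by
    rintro rfl
    exact hBF' (hsymm hF'Y')
  by_cases hFF' : F = F'
  · subst hFF'
    exact hAF (hsymm hF'Y')
  · exact hdisj F hF Y hY F' hF' Y' hY' hFF' hFA hF'B.symm hBA hFY hF'Y'

section Regular

variable [G.LocallyFinite]

theorem kDominatingSet_iff_isVertexCover (hG : G.IsRegularOfDegree k) {S : Set V} :
    KDominatingSet G k S ↔ G.IsVertexCover S := by
  have hfull : ∀ v, k ≤ (S ∩ G.neighborSet v).ncard ↔ G.neighborSet v ⊆ S := by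
    intro v
    have hN : (G.neighborSet v).ncard = k := by
      rw [ncard_neighborSet_eq_degree, hG.degree_eq]
    constructor
    · intro h
      rw [← Set.inter_eq_right, Set.eq_of_subset_of_ncard_le Set.inter_subset_right
        (hN ▸ h) (Set.toFinite _)]
    · intro h
      rw [Set.inter_eq_right.mpr h, hN]
  simp only [KDominatingSet, hfull]
  exact ⟨fun h u v huv => or_iff_not_imp_left.mpr fun hu => h u hu huv,
    fun h v hv w hw => (h hw).resolve_left hv⟩

theorem exists_adj_ne_of_isRegularOfDegree (hG : G.IsRegularOfDegree k) (hk : 2 ≤ k)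
    (v w : V) : ∃ u, G.Adj v u ∧ u ≠ w := by
  obtain ⟨u, hu, huw⟩ := Finset.exists_mem_ne
    (by rw [card_neighborFinset_eq_degree, hG.degree_eq]; omega : 1 < (G.neighborFinset v).card) w
  exact ⟨u, (mem_neighborFinset G v u).mp hu, huw⟩

theorem card_le_succ_of_kDominatingSet_ncard_eq (hG : G.IsRegularOfDegree k) (hk : 0 < k)
    {P : Finset (Set V)} (hne : ∀ A ∈ P, A.Nonempty)
    (hdisj : (P : Set (Set V)).PairwiseDisjoint id) {D : Set V} (hD : D ∈ P)
    (hDdom : KDominatingSet G k D) (hDk : D.ncard = k) : P.card ≤ k + 1 := by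
  obtain ⟨d, hd⟩ := hne D hD
  have hadj : ∀ v ∉ D, G.Adj d v := by
    intro v hv
    have hDN := Set.eq_of_subset_of_ncard_le Set.inter_subset_left (hDk ▸ hDdom v hv)
      (Set.finite_of_ncard_pos (hDk ▸ hk))
    rw [← hDN] at hd
    exact hd.2.symm
  have hcard : (P.erase D).card ≤ (G.neighborSet d).ncard := by
    refine Finset.card_le_ncard_of_pairwiseDisjoint
      (fun A hA => hne A (Finset.mem_of_mem_erase hA)) (hdisj.subset (by simp))
      (fun A hA v hv => hadj v fun hvD => ?_) (Set.toFinite _)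
    exact (Finset.mem_erase.mp hA).1 (hdisj.elim_set (Finset.mem_of_mem_erase hA) hD v hv hvD)
  rw [ncard_neighborSet_eq_degree, hG.degree_eq] at hcard
  have := Finset.card_erase_add_one hD
  omega

theorem kCoalition_singleton_sdiff (hG : G.IsRegularOfDegree k) {S : Set V} {x y z : V}
    (hS : G.IsVertexCover S) (hxy : G.Adj x y) (hy : y ∉ S) (hyz : G.Adj y z) (hzx : z ≠ x) :
    KCoalition G k {x} (S \ {x}) := by
  have hx : x ∈ S := (hS hxy).resolve_right hy
  simp only [KCoalition, kDominatingSet_iff_isVertexCover hG,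
    Set.union_sdiff_cancel (Set.singleton_subset_iff.mpr hx)]
  refine ⟨Set.disjoint_sdiff_right, fun h => ?_, fun h => ?_, hS⟩
  · rcases h hyz with h | h
    · exact hxy.ne (Set.mem_singleton_iff.mp h).symm
    · exact hzx h
  · rcases h hxy with h | h
    · exact h.2 rfl
    · exact hy h.1

end Regular

theorem KCoalition.symm {A B : Set V} (h : KCoalition G k A B) : KCoalition G k B A :=
  ⟨h.1.symm, h.2.2.1, h.2.1, Set.union_comm A B ▸ h.2.2.2⟩

theorem KCoalition.nonempty_left {A B : Set V} (h : KCoalition G k A B) : A.Nonempty := by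
  rw [Set.nonempty_iff_ne_empty]
  rintro rfl
  exact h.2.2.1 (Set.empty_union B ▸ h.2.2.2)

theorem exists_kCoalitionPartition_card_eq_four_of_kCoalition {A B C D : Set V}
    (hAB : KCoalition G k A B) (hCD : KCoalition G k C D) (hc : C ∪ D = (A ∪ B)ᶜ) :
    ∃ P, KCoalitionPartition G k P ∧ P.card = 4 := by
  classical
  have hABCD : Disjoint (A ∪ B) (C ∪ D) := hc ▸ disjoint_compl_right
  have hAC := hABCD.mono Set.subset_union_left Set.subset_union_left
  have hAD := hABCD.mono Set.subset_union_left Set.subset_union_right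
  have hBC := hABCD.mono Set.subset_union_right Set.subset_union_left
  have hBD := hABCD.mono Set.subset_union_right Set.subset_union_right
  have hA := hAB.nonempty_left
  have hB := hAB.symm.nonempty_left
  have hC := hCD.nonempty_left
  have hAneB := hAB.1.ne hA.ne_empty
  have hCneD := hCD.1.ne hC.ne_empty
  refine ⟨{A, B, C, D}, ⟨?_, ?_, ?_, ?_⟩, Finset.card_eq_four.mpr ⟨A, B, C, D, hAneB,
    hAC.ne hA.ne_empty, hAD.ne hA.ne_empty, hBC.ne hB.ne_empty, hBD.ne hB.ne_empty, hCneD, rfl⟩⟩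
  · simp only [Finset.mem_insert, Finset.mem_singleton]
    rintro X (rfl | rfl | rfl | rfl)
    exacts [hA, hB, hC, hCD.symm.nonempty_left]
  · simp only [Finset.coe_insert, Finset.coe_singleton, Set.pairwiseDisjoint_insert,
      Set.pairwiseDisjoint_singleton, Set.mem_insert_iff, Set.mem_singleton_iff,
      forall_eq_or_imp, forall_eq, id]
    exact ⟨⟨⟨trivial, fun _ => hCD.1⟩, fun _ => hBC, fun _ => hBD⟩,
      fun _ => hAB.1, fun _ => hAC, fun _ => hAD⟩
  · simp only [Finset.set_biUnion_insert, Finset.set_biUnion_singleton]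
    rw [← Set.union_assoc, hc, Set.union_compl_self]
  · simp only [Finset.mem_insert, Finset.mem_singleton]
    rintro X (rfl | rfl | rfl | rfl)
    · exact .inr ⟨B, by simp, hAneB.symm, hAB⟩
    · exact .inr ⟨A, by simp, hAneB, hAB.symm⟩
    · exact .inr ⟨D, by simp, hCneD.symm, hCD⟩
    · exact .inr ⟨C, by simp, hCneD, hCD.symm⟩

theorem not_isVertexCover_union_of_isVertexCover_union {P : Finset (Set V)}
    (hG : ∀ v, ∃ w, G.Adj v w) (hne : ∀ A ∈ P, A.Nonempty)
    (hdisj : (P : Set (Set V)).PairwiseDisjoint id) (h5 : 4 < P.card)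
    {A B C D : Set V} (hA : A ∈ P) (hB : B ∈ P) (hC : C ∈ P) (hD : D ∈ P)
    (hAC : A ≠ C) (hAD : A ≠ D) (hBC : B ≠ C) (hBD : B ≠ D)
    (hAB : G.IsVertexCover (A ∪ B)) : ¬ G.IsVertexCover (C ∪ D) := by
  intro hCD
  have hcov := hAB.union_eq_univ_of_disjoint hCD (Set.disjoint_union_left.mpr
    ⟨Set.disjoint_union_right.mpr ⟨hdisj hA hC hAC, hdisj hA hD hAD⟩,
      Set.disjoint_union_right.mpr ⟨hdisj hB hC hBC, hdisj hB hD hBD⟩⟩) hG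
  obtain ⟨E, hE, hEA, hEB, hEC, hED⟩ := P.exists_mem_ne_of_four_lt_card h5 A B C D
  obtain ⟨e, he⟩ := hne E hE
  rcases hcov.symm ▸ Set.mem_univ e with (h | h) | (h | h)
  exacts [hEA (hdisj.elim_set hE hA e he h), hEB (hdisj.elim_set hE hB e he h),
    hEC (hdisj.elim_set hE hC e he h), hED (hdisj.elim_set hE hD e he h)]

theorem card_le_four_of_forall_isVertexCover_union {P : Finset (Set V)}
    (hG : ∀ v, ∃ w, G.Adj v w) (hne : ∀ A ∈ P, A.Nonempty)
    (hdisj : (P : Set (Set V)).PairwiseDisjoint id) (hcover : ∀ v, ∃ A ∈ P, v ∈ A)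
    (hpartner : ∀ A ∈ P, ¬ G.IsVertexCover A ∧ ∃ B ∈ P, G.IsVertexCover (A ∪ B)) :
    P.card ≤ 4 := by
  by_contra! h5
  obtain ⟨Z, hZ, hstar⟩ := P.exists_forall_ne_rel_of_no_disjoint_pairs
    (R := fun A B => G.IsVertexCover (A ∪ B))
    (fun A B (h : G.IsVertexCover (A ∪ B)) =>
      (Set.union_comm A B ▸ h : G.IsVertexCover (B ∪ A)))
    (fun A hA (h : G.IsVertexCover (A ∪ A)) => (hpartner A hA).1 (Set.union_self A ▸ h))
    (Finset.card_pos.mp (by omega)) (fun A hA => (hpartner A hA).2)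
    fun _ hA _ hB _ hC _ hD => not_isVertexCover_union_of_isVertexCover_union hG hne hdisj h5
      hA hB hC hD
  refine (hpartner Z hZ).1 fun u v huv => ?_
  obtain ⟨Fu, hFu, hu⟩ := hcover u
  obtain ⟨Fv, hFv, hv⟩ := hcover v
  obtain ⟨H, hH, hHZ, hHu, hHv, -⟩ := P.exists_mem_ne_of_four_lt_card h5 Z Fu Fv Fv
  rcases hstar H hH hHZ huv with (h | h) | (h | h)
  · exact .inl h
  · exact absurd (hdisj.elim_set hH hFu u h hu) hHu
  · exact .inr h
  · exact absurd (hdisj.elim_set hH hFv v h hv) hHv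

theorem KCoalitionPartition.card_le [G.LocallyFinite] (hG : G.IsRegularOfDegree k) (hk : 0 < k)
    {P : Finset (Set V)} (hP : KCoalitionPartition G k P) : P.card ≤ max 4 (k + 1) := by
  obtain ⟨hne, hdisj, hcover, hparts⟩ := hP
  by_cases hD : ∃ D ∈ P, KDominatingSet G k D ∧ D.ncard = k
  · obtain ⟨D, hD, hDdom, hDk⟩ := hD
    exact le_max_of_le_right
      (card_le_succ_of_kDominatingSet_ncard_eq hG hk hne hdisj hD hDdom hDk)
  push Not at hD
  refine le_max_of_le_left (card_le_four_of_forall_isVertexCover_union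
    (fun v => (G.degree_pos_iff_exists_adj v).mp (hG.degree_eq v ▸ hk)) hne hdisj
    (fun v => by simpa using hcover.ge (Set.mem_univ v)) fun A hA => ?_)
  obtain ⟨B, hB, -, hAB⟩ := (hparts A hA).resolve_left fun h => hD A hA h.1 h.2
  simp only [KCoalition, kDominatingSet_iff_isVertexCover hG] at hAB
  exact ⟨hAB.2.1, B, hB, hAB.2.2.2⟩

theorem exists_kCoalitionPartition_card_eq_four_of_colorable [G.LocallyFinite] [Nonempty V]
    (hG : G.IsRegularOfDegree k) (hk : 2 ≤ k) (hbip : G.Colorable 2) :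
    ∃ P, KCoalitionPartition G k P ∧ P.card = 4 := by
  obtain ⟨S, hS, hSc⟩ := hbip.exists_isVertexCover_and_compl
  obtain ⟨x, y, hxy, hy⟩ : ∃ x y, G.Adj x y ∧ y ∉ S := by
    let v := Classical.arbitrary V
    obtain ⟨w, hvw, -⟩ := exists_adj_ne_of_isRegularOfDegree hG hk v v
    rcases hSc hvw with hv | hw
    · exact ⟨w, v, hvw.symm, hv⟩
    · exact ⟨v, w, hvw, hw⟩
  have hx : x ∈ S := (hS hxy).resolve_right hy
  obtain ⟨z, hyz, hzx⟩ := exists_adj_ne_of_isRegularOfDegree hG hk y x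
  obtain ⟨z', hxz', hz'y⟩ := exists_adj_ne_of_isRegularOfDegree hG hk x y
  refine exists_kCoalitionPartition_card_eq_four_of_kCoalition
    (kCoalition_singleton_sdiff hG hS hxy hy hyz hzx)
    (kCoalition_singleton_sdiff hG hSc hxy.symm (by simpa using hx) hxz' hz'y) ?_
  simp [hx, hy]

theorem kCoalitionNumber_eq_of_forall_card_le {n : ℕ}
    (hex : ∃ P, KCoalitionPartition G k P ∧ P.card = n)
    (hle : ∀ P, KCoalitionPartition G k P → P.card ≤ n) : kCoalitionNumber G k = n :=
  IsGreatest.csSup_eq ⟨hex, by rintro _ ⟨P, hP, rfl⟩; exact hle P hP⟩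

end

theorem c3_cubic_bipartite {V : Type*} [Fintype V] [Nonempty V] (G : SimpleGraph V)
    [DecidableRel G.Adj] (hcubic : ∀ v : V, G.degree v = 3)
    (hbip : G.Colorable 2) :
    kCoalitionNumber G 3 = 4 :=
  kCoalitionNumber_eq_of_forall_card_le
    (exists_kCoalitionPartition_card_eq_four_of_colorable hcubic (by norm_num) hbip)
    fun _ hP => hP.card_le hcubic three_pos
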